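/- Let E be a poset and L a complete lattice that is dually continuous. For h ∈ E and s ∈ L, the map ⟨h,s⟩ : E → L (equal to s on {g | g ≤ h} and to ⊤ elsewhere) is maxitive. Moreover, if v : E → L is maxitive and s is way above v h in L, then ⟨h,s⟩ is way above v in the poset of maxitive maps. -/

import Mathlib

/-- `y` is way above `x`. -/
def WayAbove {α : Type*} [Preorder α] (y x : α) : Prop :=
  ∀ D : Set α, D.Nonempty → DirectedOn (· ≥ ·) D → ∀ d : α, IsGLB D d → d ≤ x → ∃ z ∈ D, z ≤ y

/-- A poset is dually continuous. -/
def DuallyContinuous (α : Type*) [Preorder α] : Prop :=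
  ∀ x : α, {y | WayAbove y x}.Nonempty ∧ DirectedOn (· ≥ ·) {y | WayAbove y x} ∧
    IsGLB {y | WayAbove y x} x

/-- A map `v : E → L` between posets is maxitive. -/
def Maxitive {E L : Type*} [Preorder E] [Preorder L] (v : E → L) : Prop :=
  ∀ S : Set E, S.Nonempty → S.Finite → ∀ b : E, IsLUB S b → IsLUB (v '' S) (v b)

open Classical in
/-- The elementary map `⟨h,s⟩`, equal to `s` on `{g | g ≤ h}` and to `⊤` elsewhere. -/
noncomputable def bracket {E L : Type*} [Preorder E] [Preorder L] [Top L]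
    (h : E) (s : L) : E → L :=
  fun g => if g ≤ h then s else ⊤

/-- `u` is way above `v` in the poset of maxitive maps (ordered pointwise). -/
def WayAboveMax {E L : Type*} [Preorder E] [CompleteLattice L] (u v : E → L) : Prop :=
  ∀ V : Set (E → L), (∀ w ∈ V, Maxitive w) → V.Nonempty →
    (∀ w ∈ V, ∀ w' ∈ V, ∃ u' ∈ V, (∀ g : E, u' g ≤ w g) ∧ (∀ g : E, u' g ≤ w' g)) →
    (∀ g : E, (⨅ w ∈ V, w g) ≤ v g) → ∃ w ∈ V, ∀ g : E, w g ≤ u g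

/-! Evaluating the directed family at `h` turns the hypothesis `∀ g, ⨅ w ∈ V, w g ≤ v g` into a
directed set in `L` with infimum below `v h`; `s ≫ v h` picks `w ∈ V` with `w h ≤ s`, and
monotonicity of `w` upgrades this to `w ≤ ⟨h,s⟩`. -/

theorem Maxitive.monotone {E L : Type*} [Preorder E] [Preorder L] {v : E → L}
    (hv : Maxitive v) : Monotone v := by
  intro g g' hle
  have hlub : IsLUB ({g, g'} : Set E) g' :=
    ⟨by rintro x (rfl | rfl); exacts [hle, le_rfl], fun _ hx => hx (by simp)⟩
  exact (hv _ (Set.insert_nonempty _ _) (Set.toFinite _) g' hlub).1 ⟨g, by simp, rfl⟩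

section Bracket

variable {E L : Type*} [Preorder E]

theorem bracket_of_le [Preorder L] [Top L] {h g : E} (s : L) (hg : g ≤ h) :
    bracket h s g = s :=
  if_pos hg

theorem bracket_of_not_le [Preorder L] [Top L] {h g : E} (s : L) (hg : ¬g ≤ h) :
    bracket h s g = ⊤ :=
  if_neg hg

theorem maxitive_bracket [Preorder L] [OrderTop L] (h : E) (s : L) :
    Maxitive (bracket h s) := by
  intro S hSne _ b hb
  by_cases hbh : b ≤ h
  · have himg : bracket h s '' S = {s} :=
      (hSne.image _).subset_singleton_iff.mp fun _ ⟨g, hg, hgs⟩ =>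
        hgs ▸ bracket_of_le s ((hb.1 hg).trans hbh)
    rw [himg, bracket_of_le s hbh]
    exact isLUB_singleton
  · obtain ⟨g, hgS, hgh⟩ : ∃ g ∈ S, ¬g ≤ h := by
      by_contra! hall
      exact hbh (hb.2 hall)
    rw [bracket_of_not_le s hbh]
    exact IsGreatest.isLUB ⟨⟨g, hgS, bracket_of_not_le s hgh⟩, fun _ _ => le_top⟩

theorem le_bracket_of_monotone [Preorder L] [OrderTop L] {w : E → L} (hw : Monotone w)
    {h : E} {s : L} (hws : w h ≤ s) : w ≤ bracket h s := by
  intro g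
  by_cases hg : g ≤ h
  · rw [bracket_of_le s hg]
    exact (hw hg).trans hws
  · rw [bracket_of_not_le s hg]
    exact le_top

theorem wayAboveMax_bracket [CompleteLattice L] {v : E → L} {h : E} {s : L}
    (hs : WayAbove s (v h)) : WayAboveMax (bracket h s) v := by
  intro V hVmax hVne hVdir hVinf
  have hdir : DirectedOn (· ≥ ·) ((fun w : E → L => w h) '' V) := by
    rintro _ ⟨w, hw, rfl⟩ _ ⟨w', hw', rfl⟩
    obtain ⟨u, hu, huw, huw'⟩ := hVdir w hw w' hw'
    exact ⟨u h, ⟨u, hu, rfl⟩, huw h, huw' h⟩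
  obtain ⟨_, ⟨w, hwV, rfl⟩, hws⟩ :=
    hs _ (hVne.image _) hdir _ isGLB_biInf (hVinf h)
  exact ⟨w, hwV, le_bracket_of_monotone (hVmax w hwV).monotone hws⟩

end Bracket

theorem bracket_maxitive_and_wayAbove_general {E L : Type*} [PartialOrder E] [CompleteLattice L]
    (h : E) (s : L) :
    Maxitive (bracket h s) ∧
      ∀ v : E → L, Maxitive v → WayAbove s (v h) → WayAboveMax (bracket h s) v :=
  ⟨maxitive_bracket h s, fun _ _ hs => wayAboveMax_bracket hs⟩

/-- The map `⟨h,s⟩` is maxitive, and it is way above any maxitive `v` as soon as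
`s` is way above `v h`. -/
theorem bracket_maxitive_and_wayAbove {E L : Type*} [PartialOrder E] [CompleteLattice L]
    (hL : DuallyContinuous L) (h : E) (s : L) :
    Maxitive (bracket h s) ∧
      ∀ v : E → L, Maxitive v → WayAbove s (v h) → WayAboveMax (bracket h s) v :=
  bracket_maxitive_and_wayAbove_general h s
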